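/- For a prime p and a positive integer x with p ∥ x (p divides x exactly once), if every prime dividing p - 1 also divides x/p, then y = x·(p-1)/p satisfies φ(y) = φ(x) and y ≠ x. -/

import Mathlib

/-!
Write `x = p * m` with `p ∤ m`, so `φ x = (p - 1) φ m` and `y = (p - 1) m`. Since every prime
factor of `p - 1` already divides `m`, multiplying `m` by `p - 1` adds no new prime factor, and
then `φ` scales by exactly `p - 1` as well.
-/

open Nat

theorem Nat.totient_mul_of_primeFactors_subset {k m : ℕ} (h : k.primeFactors ⊆ m.primeFactors) :
    φ (k * m) = k * φ m := by
  rcases eq_or_ne k 0 with rfl | hk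
  · simp
  rcases eq_or_ne m 0 with rfl | hm
  · simp
  have hpf : (k * m).primeFactors = m.primeFactors := by
    rw [primeFactors_mul hk hm, Finset.union_eq_right.mpr h]
  have hprod : 0 < ∏ q ∈ m.primeFactors, q :=
    Finset.prod_pos fun q hq => (prime_of_mem_primeFactors hq).pos
  apply Nat.eq_of_mul_eq_mul_right hprod
  calc φ (k * m) * ∏ q ∈ m.primeFactors, q
      = k * (m * ∏ q ∈ m.primeFactors, (q - 1)) := by
        rw [← hpf, totient_mul_prod_primeFactors, hpf, mul_assoc]
    _ = k * φ m * ∏ q ∈ m.primeFactors, q := by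
        rw [← totient_mul_prod_primeFactors, mul_assoc]

theorem stmt_13_general (p x : ℕ) (hp : p.Prime) (hpx : p ∣ x)
    (hp2 : ¬ p ^ 2 ∣ x)
    (hq : ∀ q : ℕ, q.Prime → q ∣ (p - 1) → q ∣ x / p) :
    x * (p - 1) / p ≠ x ∧ Nat.totient (x * (p - 1) / p) = Nat.totient x := by
  obtain ⟨m, rfl⟩ := hpx
  have hpm : ¬ p ∣ m := fun ⟨c, hc⟩ => hp2 ⟨c, by rw [hc]; ring⟩
  have hm : m ≠ 0 := by rintro rfl; exact hpm (dvd_zero p)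
  have hy : p * m * (p - 1) / p = (p - 1) * m := by
    rw [mul_assoc, Nat.mul_div_cancel_left _ hp.pos, mul_comm]
  rw [Nat.mul_div_cancel_left _ hp.pos] at hq
  have hsub : (p - 1).primeFactors ⊆ m.primeFactors := fun q hqp =>
    mem_primeFactors.mpr ⟨prime_of_mem_primeFactors hqp,
      hq q (prime_of_mem_primeFactors hqp) (dvd_of_mem_primeFactors hqp), hm⟩
  rw [hy]
  refine ⟨fun h => ?_, ?_⟩
  · have : (p - 1) * m < p * m :=
      Nat.mul_lt_mul_of_pos_right (sub_one_lt hp.ne_zero) (pos_of_ne_zero hm)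
    omega
  · rw [totient_mul_of_primeFactors_subset hsub,
      totient_mul ((Nat.Prime.coprime_iff_not_dvd hp).mpr hpm), totient_prime hp]

theorem stmt_13 (p x : ℕ) (hp : p.Prime) (hx : 0 < x) (hpx : p ∣ x)
    (hp2 : ¬ p ^ 2 ∣ x)
    (hq : ∀ q : ℕ, q.Prime → q ∣ (p - 1) → q ∣ x / p) :
    x * (p - 1) / p ≠ x ∧ Nat.totient (x * (p - 1) / p) = Nat.totient x :=
  stmt_13_general p x hp hpx hp2 hq
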